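/- Let f, g, h, d : (0,∞) → ℝ be smooth functions satisfying, for all u > 0: (uf)' - ug + uh = 0 and 3(uf)''' - 3(ug)'' + (uh)'' + 2(ud)' = 0 (where (uf) denotes the function u ↦ u·f(u), etc.). Then (uf)'''' - (ug)''' + (ud)'' = 0 for all u > 0. -/

import Mathlib

open Set Filter
open scoped ContDiff

theorem stmt_6 (f g h d : ℝ → ℝ)
    (hf : ContDiffOn ℝ (⊤ : ℕ∞) f (Set.Ioi 0)) (hg : ContDiffOn ℝ (⊤ : ℕ∞) g (Set.Ioi 0))
    (hh : ContDiffOn ℝ (⊤ : ℕ∞) h (Set.Ioi 0)) (hd : ContDiffOn ℝ (⊤ : ℕ∞) d (Set.Ioi 0))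
    (h3 : ∀ u > (0 : ℝ), deriv (fun v => v * f v) u - u * g u + u * h u = 0)
    (h5 : ∀ u > (0 : ℝ),
      3 * deriv (deriv (deriv (fun v => v * f v))) u
        - 3 * deriv (deriv (fun v => v * g v)) u
        + deriv (deriv (fun v => v * h v)) u
        + 2 * deriv (fun v => v * d v) u = 0) :
    ∀ u > (0 : ℝ),
      deriv (deriv (deriv (deriv (fun v => v * f v)))) u
        - deriv (deriv (deriv (fun v => v * g v))) u
        + deriv (deriv (fun v => v * d v)) u = 0 := by
  have hs : IsOpen (Ioi (0:ℝ)) := isOpen_Ioi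
  -- smoothness of v ↦ v * f v etc.
  have smooth : ∀ (F : ℝ → ℝ), ContDiffOn ℝ (⊤ : ℕ∞) F (Ioi 0) →
      ContDiffOn ℝ ∞ (fun v => v * F v) (Ioi 0) := by
    intro F hF
    exact (contDiffOn_id.mul hF).of_le (by simp)
  have dstep : ∀ (F : ℝ → ℝ), ContDiffOn ℝ ∞ F (Ioi 0) →
      ContDiffOn ℝ ∞ (deriv F) (Ioi 0) := by
    intro F hF
    exact hF.deriv_of_isOpen hs (by exact_mod_cast le_top)
  have diffAt : ∀ (F : ℝ → ℝ), ContDiffOn ℝ ∞ F (Ioi 0) →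
      ∀ u ∈ Ioi (0:ℝ), DifferentiableAt ℝ F u := by
    intro F hF u hu
    exact (hF.differentiableOn (by simp)).differentiableAt (hs.mem_nhds hu)
  -- the general differentiation step for a 4-term linear combination vanishing on Ioi 0
  have key : ∀ (c1 c2 c3 c4 : ℝ) (F G H K : ℝ → ℝ),
      ContDiffOn ℝ ∞ F (Ioi 0) → ContDiffOn ℝ ∞ G (Ioi 0) →
      ContDiffOn ℝ ∞ H (Ioi 0) → ContDiffOn ℝ ∞ K (Ioi 0) →
      (∀ u ∈ Ioi (0:ℝ), c1 * F u + c2 * G u + c3 * H u + c4 * K u = 0) →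
      ∀ u ∈ Ioi (0:ℝ),
        c1 * deriv F u + c2 * deriv G u + c3 * deriv H u + c4 * deriv K u = 0 := by
    intro c1 c2 c3 c4 F G H K hF hG hH hK heq u hu
    have hDer : HasDerivAt (fun v => c1 * F v + c2 * G v + c3 * H v + c4 * K v)
        (c1 * deriv F u + c2 * deriv G u + c3 * deriv H u + c4 * deriv K u) u := by
      exact ((((diffAt F hF u hu).hasDerivAt.const_mul c1).add
        ((diffAt G hG u hu).hasDerivAt.const_mul c2)).add
        ((diffAt H hH u hu).hasDerivAt.const_mul c3)).add
        ((diffAt K hK u hu).hasDerivAt.const_mul c4)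
    have hEv : (fun v => c1 * F v + c2 * G v + c3 * H v + c4 * K v) =ᶠ[nhds u]
        (fun _ => (0:ℝ)) := eventually_of_mem (hs.mem_nhds hu) heq
    have h0 : deriv (fun v => c1 * F v + c2 * G v + c3 * H v + c4 * K v) u = 0 := by
      rw [hEv.deriv_eq, deriv_const]
    rw [← hDer.deriv]
    exact h0
  set A := fun v => v * f v with hAdef
  set B := fun v => v * g v with hBdef
  set C := fun v => v * h v with hCdef
  set D := fun v => v * d v with hDdef
  have hA := smooth f hf; have hB := smooth g hg
  have hC := smooth h hh; have hD := smooth d hd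
  have hA1 := dstep A hA; have hA2 := dstep _ hA1; have hA3 := dstep _ hA2
  have hB1 := dstep B hB; have hB2 := dstep _ hB1; have hB3 := dstep _ hB2
  have hC1 := dstep C hC; have hC2 := dstep _ hC1; have hC3 := dstep _ hC2
  have hD1 := dstep D hD
  -- differentiate h3 three times
  have e1 : ∀ u ∈ Ioi (0:ℝ), 1 * deriv A u + (-1) * B u + 1 * C u + 0 * A u = 0 := by
    intro u hu
    have := h3 u hu
    simp only [hAdef, hBdef, hCdef] at *
    linarith
  have e2 := key 1 (-1) 1 0 _ _ _ _ hA1 hB hC hA e1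
  have e3 := key 1 (-1) 1 0 _ _ _ _ hA2 hB1 hC1 hA1 e2
  have e4 := key 1 (-1) 1 0 _ _ _ _ hA3 hB2 hC2 hA2 e3
  -- differentiate h5 once
  have e5 : ∀ u ∈ Ioi (0:ℝ),
      3 * deriv (deriv (deriv A)) u + (-3) * deriv (deriv B) u
        + 1 * deriv (deriv C) u + 2 * deriv D u = 0 := by
    intro u hu
    have := h5 u hu
    linarith
  have e6 := key 3 (-3) 1 2 _ _ _ _ hA3 hB2 hC2 hD1 e5
  intro u hu
  have E4 := e4 u hu
  have E6 := e6 u hu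
  linarith
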